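/- The subgroup H of G generated by σ, hℓ = τℓ·σ⁻¹·τℓ⁻¹, and hm = τm·σ·τm⁻¹ is a normal subgroup of G, and the quotient group G/H is isomorphic to ZMod 2 × ZMod 2; the isomorphism is induced by the homomorphism θ : G → ZMod 2 × ZMod 2 determined by θ(σ) = (0,0), θ(τℓ) = (1,0), θ(τm) = (0,1), which is surjective with kernel H. -/

import Mathlib

def knotRels : Set (FreeGroup (Fin 3)) :=
  {(FreeGroup.of 1 * (FreeGroup.of 0)⁻¹) ^ 2,
   (FreeGroup.of 2 * FreeGroup.of 0) ^ 2,
   (FreeGroup.of 0) ^ 2 * (FreeGroup.of 1)⁻¹ * (FreeGroup.of 2)⁻¹ *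
     FreeGroup.of 1 * FreeGroup.of 2}

abbrev G : Type := PresentedGroup knotRels

def σ : G := PresentedGroup.of 0
def τℓ : G := PresentedGroup.of 1
def τm : G := PresentedGroup.of 2
def hℓ : G := τℓ * σ⁻¹ * τℓ⁻¹
def hm : G := τm * σ * τm⁻¹

def Hsub : Subgroup G := Subgroup.closure {σ, hℓ, hm}

lemma relmk (r : FreeGroup (Fin 3)) (hr : r ∈ knotRels) : PresentedGroup.mk knotRels r = 1 :=
  (QuotientGroup.eq_one_iff r).mpr (Subgroup.subset_normalClosure hr)

lemma rel1 : (τℓ * σ⁻¹) ^ 2 = 1 := by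
  have := relmk _ (by simp [knotRels] : (FreeGroup.of 1 * (FreeGroup.of 0)⁻¹) ^ 2 ∈ knotRels)
  simpa [σ, τℓ, PresentedGroup.of, map_pow, map_mul, map_inv] using this

lemma rel2 : (τm * σ) ^ 2 = 1 := by
  have := relmk _ (by simp [knotRels] : (FreeGroup.of 2 * FreeGroup.of 0) ^ 2 ∈ knotRels)
  simpa [σ, τm, PresentedGroup.of, map_pow, map_mul] using this

lemma rel3 : σ ^ 2 * τℓ⁻¹ * τm⁻¹ * τℓ * τm = 1 := by
  have := relmk _ (by simp [knotRels] :
    (FreeGroup.of 0) ^ 2 * (FreeGroup.of 1)⁻¹ * (FreeGroup.of 2)⁻¹ *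
      FreeGroup.of 1 * FreeGroup.of 2 ∈ knotRels)
  simpa [σ, τℓ, τm, PresentedGroup.of, map_pow, map_mul, map_inv] using this

-- basic move equations
lemma e1 : τℓ * σ⁻¹ = σ * τℓ⁻¹ := by
  have h := rel1
  rw [pow_two] at h
  have : τℓ * σ⁻¹ = (τℓ * σ⁻¹)⁻¹ := by rw [eq_inv_iff_mul_eq_one]; exact h
  rw [this]; group

lemma e2 : σ⁻¹ * τℓ = τℓ⁻¹ * σ := by
  calc σ⁻¹ * τℓ = σ⁻¹ * (τℓ * σ⁻¹) * σ := by group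
    _ = σ⁻¹ * (σ * τℓ⁻¹) * σ := by rw [e1]
    _ = τℓ⁻¹ * σ := by group

lemma f1 : τm * σ = σ⁻¹ * τm⁻¹ := by
  have h := rel2
  rw [pow_two] at h
  have : τm * σ = (τm * σ)⁻¹ := by rw [eq_inv_iff_mul_eq_one]; exact h
  rw [this]; group

lemma f2 : σ * τm = τm⁻¹ * σ⁻¹ := by
  calc σ * τm = σ * (τm * σ) * σ⁻¹ := by group
    _ = σ * (σ⁻¹ * τm⁻¹) * σ⁻¹ := by rw [f1]
    _ = τm⁻¹ * σ⁻¹ := by group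

lemma f4 : τm⁻¹ * σ⁻¹ = σ * τm := f2.symm

lemma g1 : τm * τℓ = τℓ * τm * (σ * σ) := by
  have h := rel3
  rw [pow_two] at h
  calc τm * τℓ = τℓ * τm * (σ * σ * τℓ⁻¹ * τm⁻¹ * τℓ * τm) * τm⁻¹ * τℓ⁻¹ * (τm * τℓ) := by
        rw [h]; group
    _ = τℓ * τm * (σ * σ) := by group

lemma p1 : τℓ⁻¹ * τm * τℓ = τm * (σ * σ) := by
  calc τℓ⁻¹ * τm * τℓ = τℓ⁻¹ * (τm * τℓ) := by group
    _ = τℓ⁻¹ * (τℓ * τm * (σ * σ)) := by rw [g1]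
    _ = τm * (σ * σ) := by group

lemma p1i : τℓ⁻¹ * τm⁻¹ * τℓ = σ⁻¹ * σ⁻¹ * τm⁻¹ := by
  calc τℓ⁻¹ * τm⁻¹ * τℓ = (τℓ⁻¹ * τm * τℓ)⁻¹ := by group
    _ = (τm * (σ * σ))⁻¹ := by rw [p1]
    _ = σ⁻¹ * σ⁻¹ * τm⁻¹ := by group

lemma p5 : τm * σ * τm = σ⁻¹ := by
  calc τm * σ * τm = (τm * σ) * τm := by group
    _ = (σ⁻¹ * τm⁻¹) * τm := by rw [f1]
    _ = σ⁻¹ := by group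

lemma p6 : τℓ⁻¹ * σ * τℓ⁻¹ = σ⁻¹ := by
  calc τℓ⁻¹ * σ * τℓ⁻¹ = τℓ⁻¹ * (σ * τℓ⁻¹) := by group
    _ = τℓ⁻¹ * (τℓ * σ⁻¹) := by rw [← e1]
    _ = σ⁻¹ := by group

lemma Wsq1 : τℓ * τℓ = hℓ⁻¹ * σ := by
  calc τℓ * τℓ = τℓ * σ * (σ⁻¹ * τℓ) := by group
    _ = τℓ * σ * (τℓ⁻¹ * σ) := by rw [e2]
    _ = hℓ⁻¹ * σ := by simp only [hℓ]; group

lemma Wsq2 : τm * τm = hm⁻¹ * σ⁻¹ := by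
  calc τm * τm = τm * σ⁻¹ * (σ * τm) := by group
    _ = τm * σ⁻¹ * (τm⁻¹ * σ⁻¹) := by rw [f2]
    _ = hm⁻¹ * σ⁻¹ := by simp only [hm]; group

-- conjugation identities
lemma J1 : τℓ * σ * τℓ⁻¹ = hℓ⁻¹ := by simp only [hℓ]; group

lemma J2 : τℓ * hℓ * τℓ⁻¹ = hℓ⁻¹ * (σ⁻¹ * hℓ) := by
  calc τℓ * hℓ * τℓ⁻¹ = (τℓ * τℓ) * σ⁻¹ * (τℓ * τℓ)⁻¹ := by simp only [hℓ]; group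
    _ = (hℓ⁻¹ * σ) * σ⁻¹ * (hℓ⁻¹ * σ)⁻¹ := by rw [Wsq1]
    _ = hℓ⁻¹ * (σ⁻¹ * hℓ) := by group

lemma p4 : τℓ * σ⁻¹ * τℓ = σ := by
  calc τℓ * σ⁻¹ * τℓ = (τℓ * σ⁻¹) * τℓ := by group
    _ = (σ * τℓ⁻¹) * τℓ := by rw [e1]
    _ = σ := by group

lemma J3 : τℓ * hm * τℓ⁻¹ = hm⁻¹ * (σ⁻¹ * hℓ) := by
  calc τℓ * hm * τℓ⁻¹ = τℓ * ((τm * σ) * τm⁻¹) * τℓ⁻¹ := by rw [hm]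
    _ = τℓ * ((σ⁻¹ * τm⁻¹) * τm⁻¹) * τℓ⁻¹ := by rw [f1]
    _ = (τℓ * σ⁻¹ * τℓ) * (τℓ⁻¹ * τm⁻¹ * τℓ) * (τℓ⁻¹ * τm⁻¹ * τℓ) * (τℓ⁻¹ * τℓ⁻¹) := by group
    _ = σ * (σ⁻¹ * σ⁻¹ * τm⁻¹) * (σ⁻¹ * σ⁻¹ * τm⁻¹) * (τℓ⁻¹ * τℓ⁻¹) := by rw [p4, p1i]
    _ = σ⁻¹ * (τm⁻¹ * σ⁻¹) * (σ⁻¹ * τm⁻¹) * (τℓ * τℓ)⁻¹ := by group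
    _ = σ⁻¹ * (σ * τm) * (τm * σ) * (τℓ * τℓ)⁻¹ := by rw [f4, ← f1]
    _ = (τm * τm) * σ * (τℓ * τℓ)⁻¹ := by group
    _ = (hm⁻¹ * σ⁻¹) * σ * (hℓ⁻¹ * σ)⁻¹ := by rw [Wsq1, Wsq2]
    _ = hm⁻¹ * (σ⁻¹ * hℓ) := by group

lemma Qsym : τm * hℓ * τm⁻¹ = τℓ * hm⁻¹ * τℓ⁻¹ := by
  calc τm * hℓ * τm⁻¹ = (τm * τℓ) * σ⁻¹ * (τm * τℓ)⁻¹ := by simp only [hℓ]; group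
    _ = (τℓ * τm * (σ * σ)) * σ⁻¹ * (τℓ * τm * (σ * σ))⁻¹ := by rw [g1]
    _ = τℓ * (τm * σ⁻¹ * τm⁻¹) * τℓ⁻¹ := by group
    _ = τℓ * hm⁻¹ * τℓ⁻¹ := by simp only [hm]; group

lemma J5 : τm * hℓ * τm⁻¹ = hℓ⁻¹ * (σ * hm) := by
  calc τm * hℓ * τm⁻¹ = τℓ * hm⁻¹ * τℓ⁻¹ := Qsym
    _ = (τℓ * hm * τℓ⁻¹)⁻¹ := by group
    _ = (hm⁻¹ * (σ⁻¹ * hℓ))⁻¹ := by rw [J3]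
    _ = hℓ⁻¹ * (σ * hm) := by group

lemma J4 : τm * σ * τm⁻¹ = hm := by simp only [hm]

lemma J6 : τm * hm * τm⁻¹ = hm⁻¹ * (σ * hm) := by
  calc τm * hm * τm⁻¹ = (τm * τm) * σ * (τm * τm)⁻¹ := by simp only [hm]; group
    _ = (hm⁻¹ * σ⁻¹) * σ * (hm⁻¹ * σ⁻¹)⁻¹ := by rw [Wsq2]
    _ = hm⁻¹ * (σ * hm) := by group

lemma J1' : τℓ⁻¹ * σ * τℓ = σ⁻¹ * (hℓ⁻¹ * σ) := by
  calc τℓ⁻¹ * σ * τℓ = (τℓ⁻¹ * σ * τℓ⁻¹) * (τℓ * τℓ) := by group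
    _ = σ⁻¹ * (τℓ * τℓ) := by rw [p6]
    _ = σ⁻¹ * (hℓ⁻¹ * σ) := by rw [Wsq1]

lemma J2' : τℓ⁻¹ * hℓ * τℓ = σ⁻¹ := by simp only [hℓ]; group

lemma J3' : τℓ⁻¹ * hm * τℓ = σ⁻¹ * hℓ * hm⁻¹ := by
  have h : τℓ⁻¹ * hm * τℓ = (τℓ * τℓ)⁻¹ * (τℓ * hm * τℓ⁻¹) * (τℓ * τℓ) := by group
  rw [h, J3, Wsq1]; group

lemma J4' : τm⁻¹ * σ * τm = σ * hm * σ⁻¹ := by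
  calc τm⁻¹ * σ * τm = (τm * τm)⁻¹ * (τm * σ * τm) := by group
    _ = (τm * τm)⁻¹ * σ⁻¹ := by rw [p5]
    _ = (hm⁻¹ * σ⁻¹)⁻¹ * σ⁻¹ := by rw [Wsq2]
    _ = σ * hm * σ⁻¹ := by group

lemma J5' : τm⁻¹ * hℓ * τm = σ * hm * hℓ⁻¹ := by
  have h : τm⁻¹ * hℓ * τm = (τm * τm)⁻¹ * (τm * hℓ * τm⁻¹) * (τm * τm) := by group
  rw [h, J5, Wsq2]; group

lemma J6' : τm⁻¹ * hm * τm = σ := by simp only [hm]; group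

lemma c1eq : τm * τℓ * τm⁻¹ * τℓ⁻¹ = τℓ * (hm * hm) * τℓ⁻¹ := by
  calc τm * τℓ * τm⁻¹ * τℓ⁻¹ = (τm * τℓ) * τm⁻¹ * τℓ⁻¹ := by group
    _ = (τℓ * τm * (σ * σ)) * τm⁻¹ * τℓ⁻¹ := by rw [g1]
    _ = τℓ * ((τm * σ * τm⁻¹) * (τm * σ * τm⁻¹)) * τℓ⁻¹ := by group
    _ = τℓ * (hm * hm) * τℓ⁻¹ := by simp only [hm]

-- membership infrastructure
lemma sN : σ ∈ Hsub := Subgroup.subset_closure (by simp)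
lemma hlN : hℓ ∈ Hsub := Subgroup.subset_closure (by simp)
lemma hmN : hm ∈ Hsub := Subgroup.subset_closure (by simp)

lemma conjL : ∀ n ∈ Hsub, τℓ * n * τℓ⁻¹ ∈ Hsub := by
  intro n hn
  induction hn using Subgroup.closure_induction with
  | mem x hx =>
    rcases hx with rfl | rfl | rfl
    · rw [J1]; exact inv_mem hlN
    · rw [J2]; exact mul_mem (inv_mem hlN) (mul_mem (inv_mem sN) hlN)
    · rw [J3]; exact mul_mem (inv_mem hmN) (mul_mem (inv_mem sN) hlN)
  | one => simpa [mul_assoc] using one_mem Hsub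
  | mul x y _ _ hx hy =>
    rw [show τℓ * (x * y) * τℓ⁻¹ = (τℓ * x * τℓ⁻¹) * (τℓ * y * τℓ⁻¹) by group]
    exact mul_mem hx hy
  | inv x _ hx =>
    rw [show τℓ * x⁻¹ * τℓ⁻¹ = (τℓ * x * τℓ⁻¹)⁻¹ by group]
    exact inv_mem hx

lemma conjL' : ∀ n ∈ Hsub, τℓ⁻¹ * n * τℓ ∈ Hsub := by
  intro n hn
  induction hn using Subgroup.closure_induction with
  | mem x hx =>
    rcases hx with rfl | rfl | rfl
    · rw [J1']; exact mul_mem (inv_mem sN) (mul_mem (inv_mem hlN) sN)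
    · rw [J2']; exact inv_mem sN
    · rw [J3']; exact mul_mem (mul_mem (inv_mem sN) hlN) (inv_mem hmN)
  | one => simpa [mul_assoc] using one_mem Hsub
  | mul x y _ _ hx hy =>
    rw [show τℓ⁻¹ * (x * y) * τℓ = (τℓ⁻¹ * x * τℓ) * (τℓ⁻¹ * y * τℓ) by group]
    exact mul_mem hx hy
  | inv x _ hx =>
    rw [show τℓ⁻¹ * x⁻¹ * τℓ = (τℓ⁻¹ * x * τℓ)⁻¹ by group]
    exact inv_mem hx

lemma conjM : ∀ n ∈ Hsub, τm * n * τm⁻¹ ∈ Hsub := by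
  intro n hn
  induction hn using Subgroup.closure_induction with
  | mem x hx =>
    rcases hx with rfl | rfl | rfl
    · rw [J4]; exact hmN
    · rw [J5]; exact mul_mem (inv_mem hlN) (mul_mem sN hmN)
    · rw [J6]; exact mul_mem (inv_mem hmN) (mul_mem sN hmN)
  | one => simpa [mul_assoc] using one_mem Hsub
  | mul x y _ _ hx hy =>
    rw [show τm * (x * y) * τm⁻¹ = (τm * x * τm⁻¹) * (τm * y * τm⁻¹) by group]
    exact mul_mem hx hy
  | inv x _ hx =>
    rw [show τm * x⁻¹ * τm⁻¹ = (τm * x * τm⁻¹)⁻¹ by group]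
    exact inv_mem hx

lemma conjM' : ∀ n ∈ Hsub, τm⁻¹ * n * τm ∈ Hsub := by
  intro n hn
  induction hn using Subgroup.closure_induction with
  | mem x hx =>
    rcases hx with rfl | rfl | rfl
    · rw [J4']; exact mul_mem (mul_mem sN hmN) (inv_mem sN)
    · rw [J5']; exact mul_mem (mul_mem sN hmN) (inv_mem hlN)
    · rw [J6']; exact sN
  | one => simpa [mul_assoc] using one_mem Hsub
  | mul x y _ _ hx hy =>
    rw [show τm⁻¹ * (x * y) * τm = (τm⁻¹ * x * τm) * (τm⁻¹ * y * τm) by group]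
    exact mul_mem hx hy
  | inv x _ hx =>
    rw [show τm⁻¹ * x⁻¹ * τm = (τm⁻¹ * x * τm)⁻¹ by group]
    exact inv_mem hx

lemma memL2 : τℓ * τℓ ∈ Hsub := by rw [Wsq1]; exact mul_mem (inv_mem hlN) sN
lemma memM2 : τm * τm ∈ Hsub := by rw [Wsq2]; exact mul_mem (inv_mem hmN) (inv_mem sN)
lemma c1mem : τm * τℓ * τm⁻¹ * τℓ⁻¹ ∈ Hsub := by
  rw [c1eq]; exact conjL _ (mul_mem hmN hmN)

-- the homomorphism θ
def fgen : Fin 3 → Multiplicative (ZMod 2 × ZMod 2) :=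
  ![1, Multiplicative.ofAdd (1, 0), Multiplicative.ofAdd (0, 1)]

lemma hrels : ∀ r ∈ knotRels, FreeGroup.lift fgen r = 1 := by
  intro r hr
  rcases hr with rfl | rfl | rfl
  · simp [map_pow, map_mul, map_inv, fgen]
    all_goals decide
  · simp [map_pow, map_mul, fgen]
    all_goals decide
  · simp [map_pow, map_mul, map_inv, fgen]
    all_goals decide

def θ₀ : G →* Multiplicative (ZMod 2 × ZMod 2) := PresentedGroup.toGroup hrels

lemma θσ : θ₀ σ = 1 := by simp [θ₀, σ, fgen]
lemma θl : θ₀ τℓ = Multiplicative.ofAdd (1, 0) := by simp [θ₀, τℓ, fgen]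
lemma θm : θ₀ τm = Multiplicative.ofAdd (0, 1) := by simp [θ₀, τm, fgen]

-- transversal
def rr : Multiplicative (ZMod 2 × ZMod 2) → G :=
  fun x => τℓ ^ ((Multiplicative.toAdd x).1.val) * τm ^ ((Multiplicative.toAdd x).2.val)

lemma rr1 : rr 1 = 1 := by
  simp [rr]
  all_goals rfl

lemma four_cases (x : Multiplicative (ZMod 2 × ZMod 2)) :
    x = Multiplicative.ofAdd (0, 0) ∨ x = Multiplicative.ofAdd (1, 0) ∨
    x = Multiplicative.ofAdd (0, 1) ∨ x = Multiplicative.ofAdd (1, 1) := by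
  revert x; decide

lemma rr00 : rr (Multiplicative.ofAdd ((0 : ZMod 2), (0 : ZMod 2))) = 1 := by
  simp [rr]
  all_goals rfl
lemma rr10 : rr (Multiplicative.ofAdd ((1 : ZMod 2), (0 : ZMod 2))) = τℓ := by
  show τℓ ^ (1 : ZMod 2).val * τm ^ (0 : ZMod 2).val = τℓ
  norm_num [ZMod.val_one]
lemma rr01 : rr (Multiplicative.ofAdd ((0 : ZMod 2), (1 : ZMod 2))) = τm := by
  show τℓ ^ (0 : ZMod 2).val * τm ^ (1 : ZMod 2).val = τm
  norm_num [ZMod.val_one]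
lemma rr11 : rr (Multiplicative.ofAdd ((1 : ZMod 2), (1 : ZMod 2))) = τℓ * τm := by
  show τℓ ^ (1 : ZMod 2).val * τm ^ (1 : ZMod 2).val = τℓ * τm
  norm_num [ZMod.val_one]

lemma conj_rr : ∀ (x : Multiplicative (ZMod 2 × ZMod 2)), ∀ n ∈ Hsub,
    rr x * n * (rr x)⁻¹ ∈ Hsub := by
  intro x n hn
  rcases four_cases x with rfl | rfl | rfl | rfl
  · rw [rr00]; simpa using hn
  · rw [rr10]; exact conjL n hn
  · rw [rr01]; exact conjM n hn
  · rw [rr11]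
    rw [show τℓ * τm * n * (τℓ * τm)⁻¹ = τℓ * (τm * n * τm⁻¹) * τℓ⁻¹ by group]
    exact conjL _ (conjM n hn)

lemma conj_rr' : ∀ (x : Multiplicative (ZMod 2 × ZMod 2)), ∀ n ∈ Hsub,
    (rr x)⁻¹ * n * rr x ∈ Hsub := by
  intro x n hn
  rcases four_cases x with rfl | rfl | rfl | rfl
  · rw [rr00]; simpa using hn
  · rw [rr10]; exact conjL' n hn
  · rw [rr01]; exact conjM' n hn
  · rw [rr11]
    rw [show (τℓ * τm)⁻¹ * n * (τℓ * τm) = τm⁻¹ * (τℓ⁻¹ * n * τℓ) * τm by group]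
    exact conjM' _ (conjL' n hn)

lemma coc : ∀ x y : Multiplicative (ZMod 2 × ZMod 2),
    rr x * rr y * (rr (x * y))⁻¹ ∈ Hsub := by
  intro x y
  rcases four_cases x with rfl | rfl | rfl | rfl <;>
    rcases four_cases y with rfl | rfl | rfl | rfl
  · rw [show (Multiplicative.ofAdd ((0 : ZMod 2), (0 : ZMod 2)) * Multiplicative.ofAdd ((0 : ZMod 2), (0 : ZMod 2))) = Multiplicative.ofAdd ((0 : ZMod 2), (0 : ZMod 2)) from by decide]
    simp only [rr00, rr10, rr01, rr11]
    simpa [mul_assoc] using one_mem Hsub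
  · rw [show (Multiplicative.ofAdd ((0 : ZMod 2), (0 : ZMod 2)) * Multiplicative.ofAdd ((1 : ZMod 2), (0 : ZMod 2))) = Multiplicative.ofAdd ((1 : ZMod 2), (0 : ZMod 2)) from by decide]
    simp only [rr00, rr10, rr01, rr11]
    simpa [mul_assoc] using one_mem Hsub
  · rw [show (Multiplicative.ofAdd ((0 : ZMod 2), (0 : ZMod 2)) * Multiplicative.ofAdd ((0 : ZMod 2), (1 : ZMod 2))) = Multiplicative.ofAdd ((0 : ZMod 2), (1 : ZMod 2)) from by decide]
    simp only [rr00, rr10, rr01, rr11]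
    simpa [mul_assoc] using one_mem Hsub
  · rw [show (Multiplicative.ofAdd ((0 : ZMod 2), (0 : ZMod 2)) * Multiplicative.ofAdd ((1 : ZMod 2), (1 : ZMod 2))) = Multiplicative.ofAdd ((1 : ZMod 2), (1 : ZMod 2)) from by decide]
    simp only [rr00, rr10, rr01, rr11]
    simpa [mul_assoc] using one_mem Hsub
  · rw [show (Multiplicative.ofAdd ((1 : ZMod 2), (0 : ZMod 2)) * Multiplicative.ofAdd ((0 : ZMod 2), (0 : ZMod 2))) = Multiplicative.ofAdd ((1 : ZMod 2), (0 : ZMod 2)) from by decide]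
    simp only [rr00, rr10, rr01, rr11]
    simpa [mul_assoc] using one_mem Hsub
  · rw [show (Multiplicative.ofAdd ((1 : ZMod 2), (0 : ZMod 2)) * Multiplicative.ofAdd ((1 : ZMod 2), (0 : ZMod 2))) = Multiplicative.ofAdd ((0 : ZMod 2), (0 : ZMod 2)) from by decide]
    simp only [rr00, rr10, rr01, rr11]
    simpa using memL2
  · rw [show (Multiplicative.ofAdd ((1 : ZMod 2), (0 : ZMod 2)) * Multiplicative.ofAdd ((0 : ZMod 2), (1 : ZMod 2))) = Multiplicative.ofAdd ((1 : ZMod 2), (1 : ZMod 2)) from by decide]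
    simp only [rr00, rr10, rr01, rr11]
    simpa [mul_assoc] using one_mem Hsub
  · rw [show (Multiplicative.ofAdd ((1 : ZMod 2), (0 : ZMod 2)) * Multiplicative.ofAdd ((1 : ZMod 2), (1 : ZMod 2))) = Multiplicative.ofAdd ((0 : ZMod 2), (1 : ZMod 2)) from by decide]
    simp only [rr00, rr10, rr01, rr11]
    rw [show τℓ * (τℓ * τm) * τm⁻¹ = τℓ * τℓ by group]
    exact memL2
  · rw [show (Multiplicative.ofAdd ((0 : ZMod 2), (1 : ZMod 2)) * Multiplicative.ofAdd ((0 : ZMod 2), (0 : ZMod 2))) = Multiplicative.ofAdd ((0 : ZMod 2), (1 : ZMod 2)) from by decide]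
    simp only [rr00, rr10, rr01, rr11]
    simpa [mul_assoc] using one_mem Hsub
  · rw [show (Multiplicative.ofAdd ((0 : ZMod 2), (1 : ZMod 2)) * Multiplicative.ofAdd ((1 : ZMod 2), (0 : ZMod 2))) = Multiplicative.ofAdd ((1 : ZMod 2), (1 : ZMod 2)) from by decide]
    simp only [rr00, rr10, rr01, rr11]
    rw [show τm * τℓ * (τℓ * τm)⁻¹ = τm * τℓ * τm⁻¹ * τℓ⁻¹ by group]
    exact c1mem
  · rw [show (Multiplicative.ofAdd ((0 : ZMod 2), (1 : ZMod 2)) * Multiplicative.ofAdd ((0 : ZMod 2), (1 : ZMod 2))) = Multiplicative.ofAdd ((0 : ZMod 2), (0 : ZMod 2)) from by decide]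
    simp only [rr00, rr10, rr01, rr11]
    simpa using memM2
  · rw [show (Multiplicative.ofAdd ((0 : ZMod 2), (1 : ZMod 2)) * Multiplicative.ofAdd ((1 : ZMod 2), (1 : ZMod 2))) = Multiplicative.ofAdd ((1 : ZMod 2), (0 : ZMod 2)) from by decide]
    simp only [rr00, rr10, rr01, rr11]
    rw [show τm * (τℓ * τm) * τℓ⁻¹ = (τm * τℓ * τm⁻¹ * τℓ⁻¹) * (τℓ * (τm * τm) * τℓ⁻¹) by group]
    exact mul_mem c1mem (conjL _ memM2)
  · rw [show (Multiplicative.ofAdd ((1 : ZMod 2), (1 : ZMod 2)) * Multiplicative.ofAdd ((0 : ZMod 2), (0 : ZMod 2))) = Multiplicative.ofAdd ((1 : ZMod 2), (1 : ZMod 2)) from by decide]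
    simp only [rr00, rr10, rr01, rr11]
    simpa [mul_assoc] using one_mem Hsub
  · rw [show (Multiplicative.ofAdd ((1 : ZMod 2), (1 : ZMod 2)) * Multiplicative.ofAdd ((1 : ZMod 2), (0 : ZMod 2))) = Multiplicative.ofAdd ((0 : ZMod 2), (1 : ZMod 2)) from by decide]
    simp only [rr00, rr10, rr01, rr11]
    rw [show (τℓ * τm) * τℓ * τm⁻¹ = (τℓ * (τm * τℓ * τm⁻¹ * τℓ⁻¹) * τℓ⁻¹) * (τℓ * τℓ) by group]
    exact mul_mem (conjL _ c1mem) memL2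
  · rw [show (Multiplicative.ofAdd ((1 : ZMod 2), (1 : ZMod 2)) * Multiplicative.ofAdd ((0 : ZMod 2), (1 : ZMod 2))) = Multiplicative.ofAdd ((1 : ZMod 2), (0 : ZMod 2)) from by decide]
    simp only [rr00, rr10, rr01, rr11]
    rw [show (τℓ * τm) * τm * τℓ⁻¹ = τℓ * (τm * τm) * τℓ⁻¹ by group]
    exact conjL _ memM2
  · rw [show (Multiplicative.ofAdd ((1 : ZMod 2), (1 : ZMod 2)) * Multiplicative.ofAdd ((1 : ZMod 2), (1 : ZMod 2))) = Multiplicative.ofAdd ((0 : ZMod 2), (0 : ZMod 2)) from by decide]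
    simp only [rr00, rr10, rr01, rr11]
    rw [show (τℓ * τm) * (τℓ * τm) * (1 : G)⁻¹ = (τℓ * (τm * τℓ * τm⁻¹ * τℓ⁻¹) * τℓ⁻¹) * (τℓ * τℓ) * (τm * τm) by group]
    exact mul_mem (mul_mem (conjL _ c1mem) memL2) memM2

def Tsub : Subgroup G where
  carrier := {g | g * (rr (θ₀ g))⁻¹ ∈ Hsub}
  one_mem' := by
    simp only [Set.mem_setOf_eq, map_one, rr1, inv_one, mul_one]
    exact one_mem Hsub
  mul_mem' := by
    intro a b ha hb
    simp only [Set.mem_setOf_eq, map_mul] at *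
    rw [show a * b * (rr (θ₀ a * θ₀ b))⁻¹ =
      (a * (rr (θ₀ a))⁻¹) * (rr (θ₀ a) * (b * (rr (θ₀ b))⁻¹) * (rr (θ₀ a))⁻¹) *
        (rr (θ₀ a) * rr (θ₀ b) * (rr (θ₀ a * θ₀ b))⁻¹) by group]
    exact mul_mem (mul_mem ha (conj_rr _ _ hb)) (coc _ _)
  inv_mem' := by
    intro a ha
    simp only [Set.mem_setOf_eq, map_inv] at *
    rw [show a⁻¹ * (rr (θ₀ a)⁻¹)⁻¹ =
      ((rr (θ₀ a))⁻¹ * (a * (rr (θ₀ a))⁻¹)⁻¹ * rr (θ₀ a)) *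
        ((rr ((θ₀ a)⁻¹ * θ₀ a))⁻¹ * (rr ((θ₀ a)⁻¹) * rr (θ₀ a) * (rr ((θ₀ a)⁻¹ * θ₀ a))⁻¹)⁻¹)
        by group]
    refine mul_mem (conj_rr' _ _ (inv_mem ha)) (mul_mem ?_ (inv_mem (coc _ _)))
    rw [inv_mul_cancel, rr1]
    exact inv_mem (one_mem Hsub)

lemma ker_le_Hsub : θ₀.ker ≤ Hsub := by
  intro g hg
  have hT : g ∈ Tsub := PresentedGroup.generated_by knotRels Tsub
    (by
      intro j
      fin_cases j
      · show σ * (rr (θ₀ σ))⁻¹ ∈ Hsub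
        rw [θσ, rr1]; simpa using sN
      · show τℓ * (rr (θ₀ τℓ))⁻¹ ∈ Hsub
        rw [θl, rr10]; simpa using one_mem Hsub
      · show τm * (rr (θ₀ τm))⁻¹ ∈ Hsub
        rw [θm, rr01]; simpa using one_mem Hsub) g
  have : g * (rr (θ₀ g))⁻¹ ∈ Hsub := hT
  rw [MonoidHom.mem_ker.mp hg, rr1] at this
  simpa using this

lemma Hsub_le_ker : Hsub ≤ θ₀.ker := by
  rw [Hsub, Subgroup.closure_le]
  rintro x (rfl | rfl | rfl)
  · exact MonoidHom.mem_ker.mpr θσ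
  · refine MonoidHom.mem_ker.mpr ?_
    simp only [hℓ, map_mul, map_inv, θσ, θl]
    group
  · refine MonoidHom.mem_ker.mpr ?_
    simp only [hm, map_mul, map_inv, θσ, θm]
    group

lemma ker_eq : θ₀.ker = Hsub := le_antisymm ker_le_Hsub Hsub_le_ker

lemma θ_surj : Function.Surjective ⇑θ₀ := by
  intro y
  rcases four_cases y with rfl | rfl | rfl | rfl
  · exact ⟨1, by rw [map_one]; rfl⟩
  · exact ⟨τℓ, θl⟩
  · exact ⟨τm, θm⟩
  · exact ⟨τℓ * τm, by rw [map_mul, θl, θm]; decide⟩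

/-- H is normal in G and G/H ≅ ℤ/2 × ℤ/2, the isomorphism being induced by the
homomorphism θ with θ(σ) = (0,0), θ(τℓ) = (1,0), θ(τm) = (0,1), which is
surjective with kernel H. -/
theorem stmt_2 :
    Hsub.Normal ∧
    ∃ θ : G →* Multiplicative (ZMod 2 × ZMod 2),
      θ σ = Multiplicative.ofAdd ((0, 0) : ZMod 2 × ZMod 2) ∧
      θ τℓ = Multiplicative.ofAdd ((1, 0) : ZMod 2 × ZMod 2) ∧
      θ τm = Multiplicative.ofAdd ((0, 1) : ZMod 2 × ZMod 2) ∧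
      Function.Surjective ⇑θ ∧
      θ.ker = Hsub ∧
      Nonempty ((G ⧸ θ.ker) ≃* Multiplicative (ZMod 2 × ZMod 2)) := by
  refine ⟨ker_eq ▸ θ₀.normal_ker, θ₀, θσ, θl, θm, θ_surj, ker_eq,
    ⟨QuotientGroup.quotientKerEquivOfSurjective θ₀ θ_surj⟩⟩
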